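/- Dimension of homogeneous biharmonic polynomials (Lemma 3.8, part 2): For every integer n ≥ 1 and every integer d ≥ 0, let B_d^n be the kernel of the linear map ΔΔ : A_d^n → A_{d−4}^n. Then dim B_d^n = dim A_d^n − dim A_{d−4}^n (where dim A_j^n = 0 for j < 0). -/

import Mathlib

/-!
Rank–nullity for `ΔΔ` restricted to `A_d` reduces the claim to computing the image `ΔΔ(A_d)`.
For `d < 4` it is zero because `ΔΔ` lowers the degree by four. For `d ≥ 4` it is all of
`A_{d-4}`, since `Δ : A_{k+2} → A_k` is onto once `n ≥ 1`: for `t = s + 2e_{i₀}`,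
`Δ x^t = (s_{i₀} + 2)(s_{i₀} + 1) x^s + ∑_{j ≠ i₀} c_j x^{t - 2e_j}`, and every monomial in the
sum has the same degree as `x^s` but a larger exponent of `x_{i₀}`, so by downward induction on
that exponent `x^s` lies in the image.
-/

noncomputable section

open MvPolynomial

/-- The polynomial Laplacian `Δp = ∑ i, ∂²p/∂x_i²` on `MvPolynomial (Fin n) ℝ`. -/
def polyLap (n : ℕ) : MvPolynomial (Fin n) ℝ →ₗ[ℝ] MvPolynomial (Fin n) ℝ :=
  ∑ i : Fin n, ((pderiv i).toLinearMap ∘ₗ (pderiv i).toLinearMap)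

/-- `dim A_j^n` for `j : ℤ`, with `dim A_j^n = 0` for `j < 0`. -/
def dimA (n : ℕ) (j : ℤ) : ℕ :=
  if 0 ≤ j then Module.finrank ℝ ↥(homogeneousSubmodule (Fin n) ℝ j.toNat) else 0

open Module

theorem Submodule.finrank_inf_ker_add_finrank_map {K V W : Type*} [DivisionRing K]
    [AddCommGroup V] [Module K V] [AddCommGroup W] [Module K W] (f : V →ₗ[K] W)
    (p : Submodule K V) [FiniteDimensional K p] :
    finrank K ↥(p ⊓ LinearMap.ker f) + finrank K ↥(p.map f) = finrank K p := by
  have := (f.domRestrict p).finrank_range_add_finrank_ker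
  rw [LinearMap.range_domRestrict, LinearMap.ker_domRestrict, ← Submodule.finrank_map_subtype_eq,
    Submodule.map_comap_subtype] at this
  omega

namespace MvPolynomial

instance finite_homogeneousSubmodule {σ R : Type*} [CommSemiring R] [Finite σ] (d : ℕ) :
    Module.Finite R (homogeneousSubmodule σ R d) :=
  Module.Finite.iff_fg.mpr (homogeneousSubmodule_fg σ R d)

theorem pderiv_eq_zero_of_isHomogeneous_zero {σ R : Type*} [CommSemiring R]
    {p : MvPolynomial σ R} (hp : p.IsHomogeneous 0) (i : σ) : pderiv i p = 0 := by
  rw [← totalDegree_zero_iff_isHomogeneous, totalDegree_eq_zero_iff_eq_C] at hp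
  rw [hp, pderiv_C]

end MvPolynomial

section Laplacian

variable {n : ℕ}

theorem polyLap_apply (p : MvPolynomial (Fin n) ℝ) :
    polyLap n p = ∑ i : Fin n, pderiv i (pderiv i p) := by
  simp [polyLap]

theorem polyLap_monomial (t : Fin n →₀ ℕ) (c : ℝ) :
    polyLap n (monomial t c) =
      ∑ j : Fin n, (t j * (t j - 1)) • monomial (t - Finsupp.single j 2) c := by
  rw [polyLap_apply]
  refine Finset.sum_congr rfl fun j _ => ?_
  rw [pderiv_monomial, pderiv_monomial, tsub_tsub, ← Finsupp.single_add,
    ← Nat.cast_smul_eq_nsmul ℝ, smul_monomial, Finsupp.tsub_apply, Finsupp.single_eq_same]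
  push_cast
  ring_nf

theorem MvPolynomial.IsHomogeneous.polyLap {p : MvPolynomial (Fin n) ℝ} {m : ℕ}
    (hp : p.IsHomogeneous m) :
    (_root_.polyLap n p).IsHomogeneous (m - 2) := by
  rw [polyLap_apply]
  exact IsHomogeneous.sum _ _ _ fun i _ => hp.pderiv.pderiv

theorem polyLap_eq_zero_of_isHomogeneous {p : MvPolynomial (Fin n) ℝ} {m : ℕ}
    (hp : p.IsHomogeneous m) (hm : m < 2) : polyLap n p = 0 := by
  rw [polyLap_apply]
  refine Finset.sum_eq_zero fun i _ => pderiv_eq_zero_of_isHomogeneous_zero ?_ i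
  simpa [show m - 1 = 0 by omega] using hp.pderiv (i := i)

theorem monomial_one_mem_map_polyLap (i₀ : Fin n) (s : Fin n →₀ ℕ) :
    monomial s (1 : ℝ) ∈ (homogeneousSubmodule (Fin n) ℝ (s.degree + 2)).map (polyLap n) := by
  set V := (homogeneousSubmodule (Fin n) ℝ (s.degree + 2)).map (polyLap n)
  set t := s + Finsupp.single i₀ 2
  have ht_deg : t.degree = s.degree + 2 := by simp [t]
  have ht_i₀ : t i₀ = s i₀ + 2 := by simp [t]
  have hΔt : polyLap n (monomial t 1) ∈ V :=
    Submodule.mem_map_of_mem (isHomogeneous_monomial _ ht_deg)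
  rw [polyLap_monomial, ← Finset.add_sum_erase _ _ (Finset.mem_univ i₀),
    show t - Finsupp.single i₀ 2 = s from add_tsub_cancel_right _ _] at hΔt
  have hrest : ∀ j ∈ Finset.univ.erase i₀,
      (t j * (t j - 1)) • monomial (t - Finsupp.single j 2) (1 : ℝ) ∈ V := by
    intro j hj
    have hj₀ : j ≠ i₀ := Finset.ne_of_mem_erase hj
    by_cases htj : 2 ≤ t j
    · obtain ⟨u, hu⟩ : ∃ u, u + Finsupp.single j 2 = t :=
        ⟨_, tsub_add_cancel_of_le (Finsupp.single_le_iff.mpr htj)⟩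
      have hu_deg : u.degree = s.degree := by
        have := congrArg Finsupp.degree hu
        rw [map_add, Finsupp.degree_single, ht_deg] at this
        omega
      have hu_i₀ : u i₀ = s i₀ + 2 := by
        simpa [Finsupp.single_eq_of_ne hj₀.symm, ht_i₀] using congrArg (· i₀) hu
      have hu_le : u i₀ ≤ u.degree := Finsupp.le_degree i₀ u
      have hu_mem := monomial_one_mem_map_polyLap i₀ u
      rw [hu_deg] at hu_mem
      rw [← hu, add_tsub_cancel_right]
      exact Submodule.smul_of_tower_mem V _ hu_mem
    · obtain h | h : t j = 0 ∨ t j = 1 := by omega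
      all_goals simp [h]
  have hs : (t i₀ * (t i₀ - 1)) • monomial s (1 : ℝ) ∈ V :=
    (Submodule.add_mem_iff_left V (Submodule.sum_mem V hrest)).mp hΔt
  have hcoeff : ((t i₀ * (t i₀ - 1) : ℕ) : ℝ) ≠ 0 := by
    simp only [ht_i₀, ne_eq, Nat.cast_eq_zero, mul_eq_zero]
    omega
  rwa [← Nat.cast_smul_eq_nsmul ℝ, Submodule.smul_mem_iff V hcoeff] at hs
termination_by s.degree - s i₀

theorem map_polyLap_homogeneousSubmodule (hn : 1 ≤ n) (k : ℕ) :
    (homogeneousSubmodule (Fin n) ℝ (k + 2)).map (polyLap n) =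
      homogeneousSubmodule (Fin n) ℝ k := by
  refine le_antisymm (Submodule.map_le_iff_le_comap.mpr fun p hp => hp.polyLap) ?_
  rw [homogeneousSubmodule_eq_finsupp_supported, AddMonoidAlgebra.supported_eq_span_single,
    Submodule.span_le]
  rintro _ ⟨s, hs, rfl⟩
  rw [← hs.out]
  exact monomial_one_mem_map_polyLap ⟨0, hn⟩ s

theorem homogeneousSubmodule_le_ker_polyLap_comp_polyLap {d : ℕ} (hd : d < 4) :
    homogeneousSubmodule (Fin n) ℝ d ≤ LinearMap.ker (polyLap n ∘ₗ polyLap n) := fun p hp =>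
  polyLap_eq_zero_of_isHomogeneous (IsHomogeneous.polyLap hp) (by omega)

theorem finrank_map_polyLap_comp_polyLap (hn : 1 ≤ n) (d : ℕ) :
    finrank ℝ ((homogeneousSubmodule (Fin n) ℝ d).map (polyLap n ∘ₗ polyLap n)) =
      dimA n ((d : ℤ) - 4) := by
  rcases lt_or_ge d 4 with hd | hd
  · rw [LinearMap.le_ker_iff_map.mp (homogeneousSubmodule_le_ker_polyLap_comp_polyLap hd),
      finrank_bot, dimA, if_neg (by omega)]
  · obtain ⟨k, rfl⟩ := Nat.exists_eq_add_of_le' hd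
    rw [Submodule.map_comp, map_polyLap_homogeneousSubmodule hn,
      map_polyLap_homogeneousSubmodule hn, dimA, if_pos (by omega),
      show ((k + 4 : ℕ) - 4 : ℤ).toNat = k by omega]

end Laplacian

/-- **Dimension of homogeneous biharmonic polynomials** (Lemma 3.8, part 2):
`dim B_d^n = dim A_d^n − dim A_{d−4}^n`. -/
theorem dim_homogeneous_biharmonic (n : ℕ) (hn : 1 ≤ n) (d : ℕ) :
    Module.finrank ℝ
        ↥(homogeneousSubmodule (Fin n) ℝ d ⊓ LinearMap.ker (polyLap n ∘ₗ polyLap n)) =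
      Module.finrank ℝ ↥(homogeneousSubmodule (Fin n) ℝ d) - dimA n ((d : ℤ) - 4) := by
  have := (homogeneousSubmodule (Fin n) ℝ d).finrank_inf_ker_add_finrank_map
    (polyLap n ∘ₗ polyLap n)
  rw [finrank_map_polyLap_comp_polyLap hn] at this
  omega
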